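/- Under the hypotheses of the conormal equations for an isothermally asymptotic surface (ν_xy = uν, ν_xx = aν_x − pν_y + (p_y+pb)ν, ν_yy = −pν_x + bν_y + (p_x+pa)ν, with u = a_y + p² = b_x + p² and the Gauss–Codazzi equations), the functions u, v = (2/3)(p_y + bp + (1/2)a² − a_x) + a_x, w = (2/3)(p_x + ap + (1/2)b² − b_y) + b_y satisfy v_y = u_x and w_x = u_y. -/

import Mathlib

noncomputable def px {E : Type*} [NormedAddCommGroup E] [NormedSpace ℝ E]
    (f : ℝ → ℝ → E) : ℝ → ℝ → E := fun x y => deriv (fun x' => f x' y) x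

noncomputable def py {E : Type*} [NormedAddCommGroup E] [NormedSpace ℝ E]
    (f : ℝ → ℝ → E) : ℝ → ℝ → E := fun x y => deriv (fun y' => f x y') y

def Smooth2 {E : Type*} [NormedAddCommGroup E] [NormedSpace ℝ E]
    (f : ℝ → ℝ → E) : Prop := ContDiff ℝ (⊤ : ℕ∞) (fun q : ℝ × ℝ => f q.1 q.2)

section helpers
variable {f g : ℝ → ℝ → ℝ}

lemma px_eq_fderiv (hf : Smooth2 f) (x y : ℝ) :
    px f x y = fderiv ℝ (fun q : ℝ × ℝ => f q.1 q.2) (x, y) (1, 0) := by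
  have h1 : HasDerivAt (fun x' : ℝ => ((x', y) : ℝ × ℝ)) (1, 0) x :=
    (hasDerivAt_id x).prodMk (hasDerivAt_const x y)
  have h2 := ((hf.differentiable (by simp)) (x, y)).hasFDerivAt
  exact (h2.comp_hasDerivAt x h1).deriv

lemma py_eq_fderiv (hf : Smooth2 f) (x y : ℝ) :
    py f x y = fderiv ℝ (fun q : ℝ × ℝ => f q.1 q.2) (x, y) (0, 1) := by
  have h1 : HasDerivAt (fun y' : ℝ => ((x, y') : ℝ × ℝ)) (0, 1) y :=
    (hasDerivAt_const y x).prodMk (hasDerivAt_id y)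
  have h2 := ((hf.differentiable (by simp)) (x, y)).hasFDerivAt
  exact (h2.comp_hasDerivAt y h1).deriv

lemma Smooth2.spx (hf : Smooth2 f) : Smooth2 (px f) := by
  have h : (fun q : ℝ × ℝ => px f q.1 q.2)
      = fun q : ℝ × ℝ => fderiv ℝ (fun q : ℝ × ℝ => f q.1 q.2) q (1, 0) :=
    funext fun q => px_eq_fderiv hf q.1 q.2
  unfold Smooth2
  rw [h]
  exact (hf.fderiv_right (by simp)).clm_apply contDiff_const

lemma Smooth2.spy (hf : Smooth2 f) : Smooth2 (py f) := by
  have h : (fun q : ℝ × ℝ => py f q.1 q.2)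
      = fun q : ℝ × ℝ => fderiv ℝ (fun q : ℝ × ℝ => f q.1 q.2) q (0, 1) :=
    funext fun q => py_eq_fderiv hf q.1 q.2
  unfold Smooth2
  rw [h]
  exact (hf.fderiv_right (by simp)).clm_apply contDiff_const

lemma clairaut (hf : Smooth2 f) (x y : ℝ) : px (py f) x y = py (px f) x y := by
  set F := fun q : ℝ × ℝ => f q.1 q.2 with hF
  have hsymm : IsSymmSndFDerivAt ℝ F (x, y) :=
    hf.contDiffAt.isSymmSndFDerivAt (by rw [minSmoothness_of_isRCLikeNormedField]; exact WithTop.coe_le_coe.mpr (le_top : (2 : ℕ∞) ≤ ⊤))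
  have hd : DifferentiableAt ℝ (fderiv ℝ F) (x, y) :=
    ((hf.fderiv_right (m := (⊤ : ℕ∞)) (by simp)).differentiable (by simp)) (x, y)
  have e1 : px (py f) x y = fderiv ℝ (fderiv ℝ F) (x, y) (1, 0) (0, 1) := by
    rw [px_eq_fderiv hf.spy x y]
    have h : (fun q : ℝ × ℝ => py f q.1 q.2) = fun q : ℝ × ℝ => fderiv ℝ F q (0, 1) :=
      funext fun q => py_eq_fderiv hf q.1 q.2
    rw [h, fderiv_clm_apply hd (differentiableAt_const _)]
    simp
  have e2 : py (px f) x y = fderiv ℝ (fderiv ℝ F) (x, y) (0, 1) (1, 0) := by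
    rw [py_eq_fderiv hf.spx x y]
    have h : (fun q : ℝ × ℝ => px f q.1 q.2) = fun q : ℝ × ℝ => fderiv ℝ F q (1, 0) :=
      funext fun q => px_eq_fderiv hf q.1 q.2
    rw [h, fderiv_clm_apply hd (differentiableAt_const _)]
    simp
  rw [e1, e2, hsymm (1,0) (0,1)]

lemma Smooth2.dslice1 (hf : Smooth2 f) (x y : ℝ) :
    DifferentiableAt ℝ (fun x' => f x' y) x := by
  have : ContDiff ℝ (⊤ : ℕ∞) (fun x' : ℝ => f x' y) :=
    hf.comp (contDiff_id.prodMk contDiff_const)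
  exact (this.differentiable (by simp)) x

lemma Smooth2.dslice2 (hf : Smooth2 f) (x y : ℝ) :
    DifferentiableAt ℝ (fun y' => f x y') y := by
  have : ContDiff ℝ (⊤ : ℕ∞) (fun y' : ℝ => f x y') :=
    hf.comp (contDiff_const.prodMk contDiff_id)
  exact (this.differentiable (by simp)) y

end helpers

section helpers2
variable {f g : ℝ → ℝ → ℝ}

lemma py_add2 (hf : Smooth2 f) (hg : Smooth2 g) (x y : ℝ) :
    py (fun x y => f x y + g x y) x y = py f x y + py g x y :=
  deriv_add (hf.dslice2 x y) (hg.dslice2 x y)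

lemma px_add2 (hf : Smooth2 f) (hg : Smooth2 g) (x y : ℝ) :
    px (fun x y => f x y + g x y) x y = px f x y + px g x y :=
  deriv_add (hf.dslice1 x y) (hg.dslice1 x y)

lemma py_const_mul2 (c : ℝ) (hf : Smooth2 f) (x y : ℝ) :
    py (fun x y => c * f x y) x y = c * py f x y :=
  deriv_const_mul c (hf.dslice2 x y)

lemma px_const_mul2 (c : ℝ) (hf : Smooth2 f) (x y : ℝ) :
    px (fun x y => c * f x y) x y = c * px f x y :=
  deriv_const_mul c (hf.dslice1 x y)

end helpers2

/-- With the isothermally asymptotic Gauss–Codazzi equations and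
`u = a_y + p²`, `v = (2/3)(p_y + bp + a²/2 - a_x) + a_x`,
`w = (2/3)(p_x + ap + b²/2 - b_y) + b_y`, we have `v_y = u_x` and `w_x = u_y`. -/
theorem backlund_potentials_sVN (p a b u v w : ℝ → ℝ → ℝ)
    (hp : Smooth2 p) (ha : Smooth2 a) (hb : Smooth2 b)
    (hGC1 : ∀ x y, px (fun x y => px p x y + a x y * p x y + (1/2) * (b x y) ^ 2 - py b x y) x y =
      (3/2) * py (fun x y => (p x y) ^ 2) x y)
    (hGC2 : ∀ x y, py (fun x y => py p x y + b x y * p x y + (1/2) * (a x y) ^ 2 - px a x y) x y =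
      (3/2) * px (fun x y => (p x y) ^ 2) x y)
    (hGC3 : ∀ x y, py a x y = px b x y)
    (hu : ∀ x y, u x y = py a x y + (p x y) ^ 2)
    (hv : ∀ x y, v x y =
      (2/3) * (py p x y + b x y * p x y + (1/2) * (a x y) ^ 2 - px a x y) + px a x y)
    (hw : ∀ x y, w x y =
      (2/3) * (px p x y + a x y * p x y + (1/2) * (b x y) ^ 2 - py b x y) + py b x y) :
    (∀ x y, py v x y = px u x y) ∧ (∀ x y, px w x y = py u x y) := by
  have hp2 : Smooth2 (fun x y => (p x y) ^ 2) := hp.pow 2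
  have hA : Smooth2 (fun x y => py p x y + b x y * p x y + (1/2) * (a x y) ^ 2 - px a x y) :=
    ((hp.spy.add (hb.mul hp)).add (contDiff_const.mul (ha.pow 2))).sub ha.spx
  have hB : Smooth2 (fun x y => px p x y + a x y * p x y + (1/2) * (b x y) ^ 2 - py b x y) :=
    ((hp.spx.add (ha.mul hp)).add (contDiff_const.mul (hb.pow 2))).sub hb.spy
  have hveq : v = fun x y =>
      (2/3) * (py p x y + b x y * p x y + (1/2) * (a x y) ^ 2 - px a x y) + px a x y :=
    funext fun x => funext fun y => hv x y
  have hweq : w = fun x y =>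
      (2/3) * (px p x y + a x y * p x y + (1/2) * (b x y) ^ 2 - py b x y) + py b x y :=
    funext fun x => funext fun y => hw x y
  have hueq : u = fun x y => py a x y + (p x y) ^ 2 :=
    funext fun x => funext fun y => hu x y
  have hA2 : Smooth2 (fun x y =>
      (2/3) * (py p x y + b x y * p x y + (1/2) * (a x y) ^ 2 - px a x y)) :=
    contDiff_const.mul hA
  have hB2 : Smooth2 (fun x y =>
      (2/3) * (px p x y + a x y * p x y + (1/2) * (b x y) ^ 2 - py b x y)) :=
    contDiff_const.mul hB
  constructor
  · intro x y
    rw [hveq, hueq, py_add2 hA2 ha.spx,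
      py_const_mul2 _ hA, hGC2 x y, px_add2 ha.spy hp2, ← clairaut ha x y]
    ring
  · intro x y
    have h3 : py a = px b := funext fun x => funext fun y => hGC3 x y
    rw [hweq, hueq, px_add2 hB2 hb.spy,
      px_const_mul2 _ hB, hGC1 x y, py_add2 ha.spy hp2, h3, ← clairaut hb x y]
    ring
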